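/- arXiv:2006.09789 — 3 statements merged into one kernel-verified Lean document; each statement's English description precedes it below -/
import Mathlib

section
/- Under the assumptions of the local existence theorem (u nonnegative with u(t) ≤ C t^{β-1} on (0,T], F locally bounded and locally Lipschitz in the second variable), the unique local solution f of f(t) = f₀ + ∫₀ᵗ u(t−s) F(s, f(s)) ds is Hölder continuous of order β: there exists L > 0 such that |f(t) − f(s)| ≤ L |t − s|^β for all t, s in the existence interval. -/
/-!
Write `U δ = ∫₀^δ u`, so that `U δ ≤ C δ^β / β`. For `s ≤ t`,
`f t - f s = ∫₀ˢ (u(t-σ) - u(s-σ)) • F(σ, f σ) dσ + ∫ₛᵗ u(t-σ) • F(σ, f σ) dσ`.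
Since `u ≥ 0` is nonincreasing, the first term has norm at most
`CR (U s - U t + U (t-s)) ≤ CR U(t-s)` and the second at most `CR U(t-s)`.

`F` is not assumed measurable in time, so at some times the integral in the equation may be the
junk value `0`, and there `f = f₀`. The estimate is therefore first proved between times where
the integrand is integrable, and then carried over to a pair of times of different kinds through
a point in the closures of both sets, which exists by connectedness.
-/

open Set MeasureTheory

theorem norm_sub_le_of_eqOn_diff {E : Type*} [NormedAddCommGroup E] {f : ℝ → E} {I S : Set ℝ}
    {y : E} {ω : ℝ → ℝ} (hI : IsClosed I) (hIc : I.OrdConnected) (hf : ContinuousOn f I)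
    (hSI : S ⊆ I) (hω : Continuous ω) (hω_mono : MonotoneOn ω (Ici 0)) (hω₀ : 0 ≤ ω 0)
    (hy : ∀ t ∈ I \ S, f t = y) (hS : ∀ s ∈ S, ∀ t ∈ S, s ≤ t → ‖f t - f s‖ ≤ ω (t - s)) :
    ∀ t ∈ I, ∀ s ∈ I, ‖f t - f s‖ ≤ ω |t - s| := by
  have hS_abs : ∀ t ∈ S, ∀ s ∈ S, ‖f t - f s‖ ≤ ω |t - s| := by
    intro t ht s hs
    rcases le_total s t with hst | hts
    · rw [abs_of_nonneg (sub_nonneg.2 hst)]; exact hS s hs t ht hst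
    · rw [norm_sub_rev, abs_sub_comm, abs_of_nonneg (sub_nonneg.2 hts)]; exact hS t ht s hs hts
  have hclS : closure S ⊆ I := closure_minimal hSI hI
  have hS_closure : ∀ t ∈ closure S, ∀ s ∈ closure S, ‖f t - f s‖ ≤ ω |t - s| := by
    intro t ht s hs
    have hf' : ContinuousOn f (closure S) := hf.mono hclS
    refine le_on_closure (s := S ×ˢ S) (f := fun p : ℝ × ℝ => ‖f p.1 - f p.2‖)
      (g := fun p => ω |p.1 - p.2|) (fun p hp => hS_abs _ hp.1 _ hp.2) ?_ ?_
      (x := (t, s)) (by rw [closure_prod_eq]; exact ⟨ht, hs⟩)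
    · rw [closure_prod_eq]
      exact ((hf'.comp continuousOn_fst fun p hp => hp.1).sub
        (hf'.comp continuousOn_snd fun p hp => hp.2)).norm
    · exact (hω.comp (continuous_fst.sub continuous_snd).abs).continuousOn
  have hy_closure : ∀ t ∈ closure (I \ S), f t = y :=
    EqOn.of_subset_closure (fun t ht => hy t ht) (hf.mono (closure_minimal sdiff_subset hI))
      continuousOn_const subset_closure Subset.rfl
  have hω_nonneg : ∀ d, 0 ≤ ω |d| := fun d =>
    hω₀.trans (hω_mono (mem_Ici.2 le_rfl) (abs_nonneg d) (abs_nonneg d))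
  have hmixed : ∀ t ∈ S, ∀ s ∈ I \ S, ‖f t - f s‖ ≤ ω |t - s| := by
    intro t ht s hs
    obtain ⟨c, hc, hcS, hcS'⟩ := isPreconnected_closed_iff.1 isPreconnected_uIcc
      (closure S) (closure (I \ S)) isClosed_closure isClosed_closure
      (fun x hx => by
        by_cases hxS : x ∈ S
        · exact Or.inl (subset_closure hxS)
        · exact Or.inr (subset_closure ⟨hIc.uIcc_subset (hSI ht) hs.1 hx, hxS⟩))
      ⟨t, left_mem_uIcc, subset_closure ht⟩ ⟨s, right_mem_uIcc, subset_closure hs⟩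
    have hct : |t - c| ≤ |t - s| := by
      rw [abs_sub_comm t c, abs_sub_comm t s]; exact abs_sub_left_of_mem_uIcc hc
    calc ‖f t - f s‖ = ‖f t - f c‖ := by rw [hy s hs, hy_closure c hcS']
      _ ≤ ω |t - c| := hS_closure t (subset_closure ht) c hcS
      _ ≤ ω |t - s| := hω_mono (abs_nonneg (t - c)) (abs_nonneg (t - s)) hct
  intro t ht s hs
  by_cases htS : t ∈ S <;> by_cases hsS : s ∈ S
  · exact hS_abs t htS s hsS
  · exact hmixed t htS s ⟨hs, hsS⟩
  · rw [norm_sub_rev, abs_sub_comm]; exact hmixed s hsS t ⟨ht, htS⟩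
  · rw [hy t ⟨ht, htS⟩, hy s ⟨hs, hsS⟩, sub_self, norm_zero]; exact hω_nonneg _

section Kernel

variable {u : ℝ → ℝ} {C β δ : ℝ}

theorem intervalIntegrable_of_antitoneOn_of_le_rpow (hβ : 0 < β) (hδ : 0 ≤ δ)
    (hmono : AntitoneOn u (Ioc 0 δ)) (hu : ∀ x ∈ Ioc 0 δ, 0 ≤ u x ∧ u x ≤ C * x ^ (β - 1)) :
    IntervalIntegrable u volume 0 δ := by
  refine ((intervalIntegral.intervalIntegrable_rpow' (r := β - 1) (by linarith)).const_mul
    C).mono_fun' ?_ ?_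
  · rw [uIoc_of_le hδ]
    exact (aemeasurable_restrict_of_antitoneOn measurableSet_Ioc hmono).aestronglyMeasurable
  · rw [uIoc_of_le hδ]
    filter_upwards [ae_restrict_mem measurableSet_Ioc] with x hx
    rw [Real.norm_of_nonneg (hu x hx).1]
    exact (hu x hx).2

theorem integral_le_of_antitoneOn_of_le_rpow (hβ : 0 < β) (hδ : 0 ≤ δ)
    (hmono : AntitoneOn u (Ioc 0 δ)) (hu : ∀ x ∈ Ioc 0 δ, 0 ≤ u x ∧ u x ≤ C * x ^ (β - 1)) :
    ∫ x in 0..δ, u x ≤ C / β * δ ^ β := by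
  have hrpow : IntervalIntegrable (fun x : ℝ => C * x ^ (β - 1)) volume 0 δ :=
    (intervalIntegral.intervalIntegrable_rpow' (r := β - 1) (by linarith)).const_mul C
  calc ∫ x in 0..δ, u x ≤ ∫ x in 0..δ, C * x ^ (β - 1) :=
        intervalIntegral.integral_mono_on_of_le_Ioo hδ
          (intervalIntegrable_of_antitoneOn_of_le_rpow hβ hδ hmono hu) hrpow
          fun x hx => (hu x (Ioo_subset_Ioc_self hx)).2
    _ = C / β * δ ^ β := by
      rw [intervalIntegral.integral_const_mul, integral_rpow (Or.inl (by linarith)),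
        sub_add_cancel, Real.zero_rpow hβ.ne', sub_zero, mul_div_assoc']
      ring

end Kernel

section Volterra

variable {E : Type*} [NormedAddCommGroup E] [NormedSpace ℝ E] {k : ℝ → ℝ} {g : ℝ → E} {M s t : ℝ}

theorem norm_integral_kernel_smul_le (hst : s ≤ t) (hk₀ : ∀ x ∈ Ioc 0 (t - s), 0 ≤ k x)
    (hki : IntervalIntegrable k volume 0 (t - s)) (hg : ∀ σ ∈ Ioc s t, ‖g σ‖ ≤ M) :
    ‖∫ σ in s..t, k (t - σ) • g σ‖ ≤ M * ∫ x in 0..(t - s), k x := by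
  have hkt : IntervalIntegrable (fun σ => k (t - σ)) volume s t := by
    simpa using (hki.comp_sub_left t).symm
  calc ‖∫ σ in s..t, k (t - σ) • g σ‖ ≤ ∫ σ in s..t, M * k (t - σ) := by
        refine intervalIntegral.norm_integral_le_of_norm_le hst ?_ (hkt.const_mul M)
        filter_upwards [Measure.ae_ne volume t] with σ hσt hσ
        have hkσ : 0 ≤ k (t - σ) :=
          hk₀ _ ⟨sub_pos.2 (lt_of_le_of_ne hσ.2 hσt), by linarith [hσ.1]⟩
        rw [norm_smul, Real.norm_of_nonneg hkσ, mul_comm M]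
        exact mul_le_mul_of_nonneg_left (hg σ hσ) hkσ
    _ = M * ∫ x in 0..(t - s), k x := by
        rw [intervalIntegral.integral_const_mul, intervalIntegral.integral_comp_sub_left, sub_self]

theorem norm_integral_kernel_sub_smul_le (hM : 0 ≤ M) (hs : 0 ≤ s) (hst : s ≤ t)
    (hk₀ : ∀ x ∈ Ioc 0 t, 0 ≤ k x) (hk : AntitoneOn k (Ioc 0 t))
    (hki : IntervalIntegrable k volume 0 t) (hg : ∀ σ ∈ Ioc 0 s, ‖g σ‖ ≤ M) :
    ‖∫ σ in 0..s, (k (t - σ) - k (s - σ)) • g σ‖ ≤ M * ∫ x in 0..(t - s), k x := by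
  have hks : IntervalIntegrable (fun σ => k (s - σ)) volume 0 s := by
    have := hki.mono_set (uIcc_subset_uIcc_left (x := s) ⟨by simp [hs], by simp [hst]⟩)
    simpa using (this.comp_sub_left s).symm
  have hkt : IntervalIntegrable (fun σ => k (t - σ)) volume 0 s := by
    have := hki.mono_set (uIcc_subset_uIcc_right (x := t - s) ⟨by simp [hst], by simp [hs]⟩)
    simpa using (this.comp_sub_left t).symm
  have hmono : ∫ x in 0..s, k x ≤ ∫ x in 0..t, k x :=
    intervalIntegral.integral_mono_interval le_rfl hs hst
      ((ae_restrict_iff' measurableSet_Ioc).2 (ae_of_all _ hk₀)) hki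
  have hadd : ∫ x in 0..t, k x = (∫ x in 0..(t - s), k x) + ∫ x in (t - s)..t, k x :=
    (intervalIntegral.integral_add_adjacent_intervals
      (hki.mono_set (uIcc_subset_uIcc_left ⟨by simp [hst], by simp [hs]⟩))
      (hki.mono_set (uIcc_subset_uIcc_right ⟨by simp [hst], by simp [hs]⟩))).symm
  calc ‖∫ σ in 0..s, (k (t - σ) - k (s - σ)) • g σ‖
        ≤ ∫ σ in 0..s, M * (k (s - σ) - k (t - σ)) := by
        refine intervalIntegral.norm_integral_le_of_norm_le hs ?_ ((hks.sub hkt).const_mul M)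
        filter_upwards [Measure.ae_ne volume s] with σ hσs hσ
        have hσs' : σ < s := lt_of_le_of_ne hσ.2 hσs
        have hkσ : k (t - σ) ≤ k (s - σ) :=
          hk ⟨by linarith, by linarith [hσ.1]⟩ ⟨by linarith, by linarith [hσ.1]⟩ (by linarith)
        rw [norm_smul, Real.norm_of_nonpos (sub_nonpos.2 hkσ), neg_sub, mul_comm M]
        exact mul_le_mul_of_nonneg_left (hg σ hσ) (sub_nonneg.2 hkσ)
    _ = M * ((∫ x in 0..s, k x) - ∫ x in (t - s)..t, k x) := by
        rw [intervalIntegral.integral_const_mul, intervalIntegral.integral_sub hks hkt,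
          intervalIntegral.integral_comp_sub_left, intervalIntegral.integral_comp_sub_left]
        simp
    _ ≤ M * ∫ x in 0..(t - s), k x := by
        gcongr
        linarith

theorem norm_volterra_sub_le (hM : 0 ≤ M) (hs : 0 ≤ s) (hst : s ≤ t)
    (hk₀ : ∀ x ∈ Ioc 0 t, 0 ≤ k x) (hk : AntitoneOn k (Ioc 0 t))
    (hki : IntervalIntegrable k volume 0 t) (hg : ∀ σ ∈ Ioc 0 t, ‖g σ‖ ≤ M)
    (hit : IntervalIntegrable (fun σ => k (t - σ) • g σ) volume 0 t)
    (his : IntervalIntegrable (fun σ => k (s - σ) • g σ) volume 0 s) :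
    ‖(∫ σ in 0..t, k (t - σ) • g σ) - ∫ σ in 0..s, k (s - σ) • g σ‖ ≤
      2 * M * ∫ x in 0..(t - s), k x := by
  have hsplit : (∫ σ in 0..t, k (t - σ) • g σ) - ∫ σ in 0..s, k (s - σ) • g σ =
      (∫ σ in 0..s, (k (t - σ) - k (s - σ)) • g σ) + ∫ σ in s..t, k (t - σ) • g σ := by
    have hit₁ := hit.mono_set (uIcc_subset_uIcc_left (x := s) ⟨by simp [hs], by simp [hst]⟩)
    have hit₂ := hit.mono_set (uIcc_subset_uIcc_right (x := s) ⟨by simp [hs], by simp [hst]⟩)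
    rw [← intervalIntegral.integral_add_adjacent_intervals hit₁ hit₂]
    simp only [sub_smul]
    rw [intervalIntegral.integral_sub hit₁ his]
    abel
  have hts : t - s ≤ t := by linarith
  calc _ ≤ ‖∫ σ in 0..s, (k (t - σ) - k (s - σ)) • g σ‖ + ‖∫ σ in s..t, k (t - σ) • g σ‖ :=
        hsplit ▸ norm_add_le _ _
    _ ≤ M * (∫ x in 0..(t - s), k x) + M * ∫ x in 0..(t - s), k x := by
        gcongr
        · exact norm_integral_kernel_sub_smul_le hM hs hst hk₀ hk hki
            fun σ hσ => hg σ ⟨hσ.1, hσ.2.trans hst⟩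
        · exact norm_integral_kernel_smul_le hst (fun x hx => hk₀ x ⟨hx.1, hx.2.trans hts⟩)
            (hki.mono_set (uIcc_subset_uIcc_left ⟨by simp [hst], by simp [hs]⟩))
            fun σ hσ => hg σ ⟨hs.trans_lt hσ.1, hσ.2⟩
    _ = 2 * M * ∫ x in 0..(t - s), k x := by ring

end Volterra

theorem stmt5_general (X : Type*) [NormedAddCommGroup X] [NormedSpace ℝ X]
    (u : ℝ → ℝ) (C β T' : ℝ) (hβ : β ∈ Set.Ioo (0:ℝ) 1) (hC : 0 < C)
    (hu : ∀ t ∈ Set.Ioc (0:ℝ) T', 0 ≤ u t ∧ u t ≤ C * t ^ (β - 1))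
    (hmono : AntitoneOn u (Set.Ioc (0:ℝ) T'))
    (f₀ : X) (R : ℝ) (F : ℝ → X → X)
    (CR : ℝ) (hCR : 0 < CR)
    (hFb : ∀ t ∈ Set.Icc (0:ℝ) T', ∀ x : X, ‖x - f₀‖ ≤ R → ‖F t x‖ ≤ CR)
    (f : ℝ → X) (hf : ContinuousOn f (Set.Icc 0 T'))
    (hfball : ∀ t ∈ Set.Icc (0:ℝ) T', ‖f t - f₀‖ ≤ R)
    (hfeq : ∀ t ∈ Set.Icc (0:ℝ) T', f t = f₀ + ∫ s in (0:ℝ)..t, u (t - s) • F s (f s)) :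
    ∃ L > (0:ℝ), ∀ t ∈ Set.Icc (0:ℝ) T', ∀ s ∈ Set.Icc (0:ℝ) T',
      ‖f t - f s‖ ≤ L * |t - s| ^ β := by
  have hβ₀ := hβ.1
  set S := {t ∈ Icc (0:ℝ) T' | IntervalIntegrable (fun σ => u (t - σ) • F σ (f σ)) volume 0 t}
  have hu_on : ∀ {δ}, δ ≤ T' → ∀ x ∈ Ioc 0 δ, 0 ≤ u x ∧ u x ≤ C * x ^ (β - 1) :=
    fun hδ x hx => hu x ⟨hx.1, hx.2.trans hδ⟩
  have hmono_on : ∀ {δ}, δ ≤ T' → AntitoneOn u (Ioc 0 δ) :=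
    fun hδ => hmono.mono (Ioc_subset_Ioc_right hδ)
  refine ⟨2 * CR * (C / β), by positivity, ?_⟩
  refine norm_sub_le_of_eqOn_diff (ω := fun d => 2 * CR * (C / β) * d ^ β) isClosed_Icc
    ordConnected_Icc hf (sep_subset _ _)
    (continuous_const.mul (Real.continuous_rpow_const hβ₀.le))
    (fun a ha b _ hab => by dsimp only; gcongr) (by positivity)
    (fun t ht => by rw [hfeq t ht.1, intervalIntegral.integral_undef fun h => ht.2 ⟨ht.1, h⟩,
      add_zero]) ?_
  intro s hs t ht hst
  have hts : t - s ≤ T' := by linarith [hs.1.1, ht.1.2]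
  calc ‖f t - f s‖
      = ‖(∫ σ in 0..t, u (t - σ) • F σ (f σ)) - ∫ σ in 0..s, u (s - σ) • F σ (f σ)‖ := by
        rw [hfeq t ht.1, hfeq s hs.1, add_sub_add_left_eq_sub]
    _ ≤ 2 * CR * ∫ x in 0..(t - s), u x :=
        norm_volterra_sub_le hCR.le hs.1.1 hst (fun x hx => (hu_on ht.1.2 x hx).1)
          (hmono_on ht.1.2)
          (intervalIntegrable_of_antitoneOn_of_le_rpow hβ₀ ht.1.1 (hmono_on ht.1.2)
            (hu_on ht.1.2))
          (fun σ hσ => hFb σ ⟨hσ.1.le, hσ.2.trans ht.1.2⟩ _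
            (hfball σ ⟨hσ.1.le, hσ.2.trans ht.1.2⟩))
          ht.2 hs.2
    _ ≤ 2 * CR * (C / β * (t - s) ^ β) := by
        gcongr
        exact integral_le_of_antitoneOn_of_le_rpow hβ₀ (sub_nonneg.2 hst) (hmono_on hts)
          (hu_on hts)
    _ = 2 * CR * (C / β) * (t - s) ^ β := by ring

/-- Hölder regularity of order β of the local solution of the Volterra
integral equation. -/
theorem stmt5 (X : Type*) [NormedAddCommGroup X] [NormedSpace ℝ X] [CompleteSpace X]
    (u : ℝ → ℝ) (C β T' : ℝ) (hβ : β ∈ Set.Ioo (0:ℝ) 1) (hC : 0 < C) (hT' : 0 < T')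
    (hu : ∀ t ∈ Set.Ioc (0:ℝ) T', 0 ≤ u t ∧ u t ≤ C * t ^ (β - 1))
    (hmono : AntitoneOn u (Set.Ioc (0:ℝ) T'))
    (f₀ : X) (R : ℝ) (hR : 0 < R) (F : ℝ → X → X)
    (CR : ℝ) (hCR : 0 < CR)
    (hFb : ∀ t ∈ Set.Icc (0:ℝ) T', ∀ x : X, ‖x - f₀‖ ≤ R → ‖F t x‖ ≤ CR)
    (LR : ℝ) (hLR : 0 < LR)
    (hFl : ∀ t ∈ Set.Icc (0:ℝ) T',
      ∀ x z : X, ‖x - f₀‖ ≤ R → ‖z - f₀‖ ≤ R → ‖F t x - F t z‖ ≤ LR * ‖x - z‖)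
    (f : ℝ → X) (hf : ContinuousOn f (Set.Icc 0 T'))
    (hfball : ∀ t ∈ Set.Icc (0:ℝ) T', ‖f t - f₀‖ ≤ R)
    (hfeq : ∀ t ∈ Set.Icc (0:ℝ) T', f t = f₀ + ∫ s in (0:ℝ)..t, u (t - s) • F s (f s)) :
    ∃ L > (0:ℝ), ∀ t ∈ Set.Icc (0:ℝ) T', ∀ s ∈ Set.Icc (0:ℝ) T',
      ‖f t - f s‖ ≤ L * |t - s| ^ β :=
  stmt5_general X u C β T' hβ hC hu hmono f₀ R F CR hCR hFb f hf hfball hfeq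
end

section
/- Let σ be a subordinator with Laplace exponent Φ such that Φ is unbounded (equivalently ν_Φ(0,∞) = ∞ or b_Φ > 0), and let L(t) be its inverse. Then for every λ ∈ ℝ and t > 0, E[e^{λ L(t)}] < ∞. -/
open Set MeasureTheory

/-- The right-continuous inverse of a process `σ`. -/
noncomputable def invSub {Ω : Type*} (σ : ℝ → Ω → ℝ) (t : ℝ) (ω : Ω) : ℝ :=
  sInf {y : ℝ | 0 < y ∧ t < σ y ω}

/-- Lemma 4.1: if the Laplace exponent `Φ` is unbounded, then
`E[e^{λ L(t)}] < ∞` for every real `λ`. -/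
theorem stmt8 {Ω : Type*} [MeasurableSpace Ω] (μ : Measure Ω) [IsProbabilityMeasure μ]
    (σ : ℝ → Ω → ℝ) (Φ : ℝ → ℝ)
    (hmono : ∀ ω, Monotone fun s => σ s ω)
    (hmeas : ∀ s, Measurable (σ s))
    (hlap : ∀ lam > (0:ℝ), ∀ s ≥ (0:ℝ),
      ∫ ω, Real.exp (-(lam * σ s ω)) ∂μ = Real.exp (-(s * Φ lam)))
    (hΦunb : ∀ M : ℝ, ∃ x > (0:ℝ), M < Φ x)
    (hmeasL : ∀ t : ℝ, Measurable (invSub σ t)) :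
    ∀ lam : ℝ, ∀ t > (0:ℝ),
      Integrable (fun ω => Real.exp (lam * invSub σ t ω)) μ := by
  intro lam t ht
  set L := invSub σ t with hLdef
  have hL0 : ∀ ω, 0 ≤ L ω := fun ω => Real.sInf_nonneg (fun y hy => hy.1.le)
  have main : ∀ l : ℝ, 0 < l → Integrable (fun ω => Real.exp (l * L ω)) μ := by
    intro l hl
    obtain ⟨x, hx, hΦ⟩ := hΦunb (2 * l)
    -- tail bound
    have htail : ∀ s : ℝ, 0 < s →
        μ {ω | s < L ω} ≤ ENNReal.ofReal (Real.exp (x * t - s * Φ x)) := by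
      intro s hs
      have hsub : {ω | s < L ω} ⊆ {ω | σ s ω ≤ t} := by
        intro ω hω
        by_contra hc
        rw [Set.mem_setOf_eq, not_le] at hc
        have hbdd : BddBelow {y : ℝ | 0 < y ∧ t < σ y ω} := ⟨0, fun y hy => hy.1.le⟩
        exact absurd (csInf_le hbdd ⟨hs, hc⟩) (not_le.2 hω)
      have hint : Integrable (fun ω => Real.exp (-(x * σ s ω))) μ := by
        by_contra hni
        have h0 := integral_undef hni
        rw [hlap x hx s hs.le] at h0
        exact (Real.exp_pos _).ne' h0
      have hlint : ∫⁻ ω, ENNReal.ofReal (Real.exp (-(x * σ s ω))) ∂μ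
          = ENNReal.ofReal (Real.exp (-(s * Φ x))) := by
        rw [← ofReal_integral_eq_lintegral_ofReal hint
          (Filter.Eventually.of_forall fun ω => (Real.exp_pos _).le), hlap x hx s hs.le]
      have hsub2 : {ω | σ s ω ≤ t} ⊆
          {ω | ENNReal.ofReal (Real.exp (-(x * t)))
            ≤ ENNReal.ofReal (Real.exp (-(x * σ s ω)))} := by
        intro ω hω
        have hω' : σ s ω ≤ t := hω
        exact ENNReal.ofReal_le_ofReal (Real.exp_le_exp.2 (by nlinarith))
      have hmarkov := mul_meas_ge_le_lintegral₀
        (μ := μ) (f := fun ω => ENNReal.ofReal (Real.exp (-(x * σ s ω))))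
        (((hmeas s).const_mul x).neg.exp.ennreal_ofReal.aemeasurable)
        (ENNReal.ofReal (Real.exp (-(x * t))))
      calc μ {ω | s < L ω} ≤ μ {ω | σ s ω ≤ t} := measure_mono hsub
        _ ≤ μ {ω | ENNReal.ofReal (Real.exp (-(x * t)))
              ≤ ENNReal.ofReal (Real.exp (-(x * σ s ω)))} := measure_mono hsub2
        _ ≤ ENNReal.ofReal (Real.exp (x * t - s * Φ x)) := by
            have h0 : (ENNReal.ofReal (Real.exp (-(x * t)))) ≠ 0 := by
              simp [ENNReal.ofReal_eq_zero, not_le, Real.exp_pos]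
            have htop : (ENNReal.ofReal (Real.exp (-(x * t)))) ≠ ⊤ := ENNReal.ofReal_ne_top
            rw [← ENNReal.mul_le_mul_iff_right h0 htop]
            calc _ ≤ ∫⁻ ω, ENNReal.ofReal (Real.exp (-(x * σ s ω))) ∂μ := hmarkov
              _ = ENNReal.ofReal (Real.exp (-(s * Φ x))) := hlint
              _ = ENNReal.ofReal (Real.exp (-(x * t)))
                    * ENNReal.ofReal (Real.exp (x * t - s * Φ x)) := by
                  rw [← ENNReal.ofReal_mul (Real.exp_pos _).le, ← Real.exp_add]
                  ring_nf
    set r := ENNReal.ofReal (Real.exp (l - Φ x / 2)) with hr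
    set C := ENNReal.ofReal (Real.exp (x * t + l)) with hC
    have hmeasExp : Measurable fun ω => Real.exp (l * L ω) := ((hmeasL t).const_mul l).exp
    refine ⟨hmeasExp.aestronglyMeasurable, ?_⟩
    rw [hasFiniteIntegral_iff_ofReal (Filter.Eventually.of_forall fun ω => (Real.exp_pos _).le)]
    have hbound : ∫⁻ ω, ENNReal.ofReal (Real.exp (l * L ω)) ∂μ ≤ ∑' n : ℕ, C * r ^ n := by
      have hle : ∀ ω, ENNReal.ofReal (Real.exp (l * L ω)) ≤
          ∑' n : ℕ, ({ω | (n : ℝ) ≤ L ω}.indicator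
            (fun _ => ENNReal.ofReal (Real.exp (l * (n + 1)))) ω) := by
        intro ω
        have hn := Nat.floor_le (hL0 ω)
        have hn1 := Nat.lt_floor_add_one (L ω)
        calc ENNReal.ofReal (Real.exp (l * L ω))
            ≤ ({ω' | ((⌊L ω⌋₊ : ℕ) : ℝ) ≤ L ω'}.indicator
                (fun _ => ENNReal.ofReal (Real.exp (l * (⌊L ω⌋₊ + 1)))) ω) := by
              rw [Set.indicator_of_mem (show ω ∈ {ω' | ((⌊L ω⌋₊ : ℕ) : ℝ) ≤ L ω'} from hn)]
              exact ENNReal.ofReal_le_ofReal (Real.exp_le_exp.2 (by nlinarith))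
          _ ≤ _ := ENNReal.le_tsum (f := fun n : ℕ => ({ω' | (n : ℝ) ≤ L ω'}.indicator
                (fun _ => ENNReal.ofReal (Real.exp (l * (n + 1)))) ω)) ⌊L ω⌋₊
      calc ∫⁻ ω, ENNReal.ofReal (Real.exp (l * L ω)) ∂μ
          ≤ ∫⁻ ω, ∑' n : ℕ, ({ω | (n : ℝ) ≤ L ω}.indicator
              (fun _ => ENNReal.ofReal (Real.exp (l * (n + 1)))) ω) ∂μ := lintegral_mono hle
        _ = ∑' n : ℕ, ∫⁻ ω, ({ω | (n : ℝ) ≤ L ω}.indicator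
              (fun _ => ENNReal.ofReal (Real.exp (l * (n + 1)))) ω) ∂μ :=
            lintegral_tsum fun n =>
              (measurable_const.indicator (measurableSet_le measurable_const (hmeasL t))).aemeasurable
        _ ≤ ∑' n : ℕ, C * r ^ n := by
            refine ENNReal.tsum_le_tsum fun n => ?_
            have hSm : MeasurableSet {ω | (n : ℝ) ≤ L ω} :=
              measurableSet_le measurable_const (hmeasL t)
            rw [lintegral_indicator hSm, setLIntegral_const]
            rcases Nat.eq_zero_or_pos n with hn | hn
            · subst hn
              simp only [Nat.cast_zero, pow_zero, mul_one]
              calc ENNReal.ofReal (Real.exp (l * (0 + 1))) * μ {ω | (0:ℝ) ≤ L ω}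
                  ≤ ENNReal.ofReal (Real.exp (l * (0 + 1))) * 1 :=
                    mul_le_mul_right prob_le_one _
                _ ≤ C := by
                    rw [mul_one, hC]
                    exact ENNReal.ofReal_le_ofReal (Real.exp_le_exp.2 (by nlinarith))
            · have hhalf : μ {ω | (n : ℝ) ≤ L ω}
                  ≤ ENNReal.ofReal (Real.exp (x * t - (n / 2) * Φ x)) := by
                refine le_trans (measure_mono ?_) (htail ((n : ℝ) / 2) (by positivity))
                intro ω hω
                have hω' : (n : ℝ) ≤ L ω := hω
                have hn' : (1 : ℝ) ≤ (n : ℝ) := by exact_mod_cast hn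
                show (n : ℝ) / 2 < L ω
                linarith
              calc ENNReal.ofReal (Real.exp (l * (n + 1))) * μ {ω | (n : ℝ) ≤ L ω}
                  ≤ ENNReal.ofReal (Real.exp (l * (n + 1)))
                      * ENNReal.ofReal (Real.exp (x * t - (n / 2) * Φ x)) :=
                    mul_le_mul_right hhalf _
                _ = C * r ^ n := by
                    rw [hC, hr, ← ENNReal.ofReal_pow (Real.exp_pos _).le,
                      ← Real.exp_nat_mul, ← ENNReal.ofReal_mul (Real.exp_pos _).le,
                      ← ENNReal.ofReal_mul (Real.exp_pos _).le,
                      ← Real.exp_add, ← Real.exp_add]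
                    congr 1
                    ring
    refine lt_of_le_of_lt hbound ?_
    rw [ENNReal.tsum_mul_left, ENNReal.tsum_geometric]
    have hr1 : r < 1 := by
      rw [hr]
      exact ENNReal.ofReal_lt_one.2 (Real.exp_lt_one_iff.2 (by linarith))
    refine ENNReal.mul_lt_top ?_ ?_
    · exact ENNReal.ofReal_lt_top
    · rw [ENNReal.inv_lt_top]
      exact tsub_pos_of_lt hr1
  have hl' : (0 : ℝ) < max lam 1 := lt_of_lt_of_le one_pos (le_max_right _ _)
  refine (main (max lam 1) hl').mono' (((hmeasL t).const_mul lam).exp).aestronglyMeasurable ?_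
  filter_upwards with ω
  rw [Real.norm_eq_abs, Real.abs_exp]
  exact Real.exp_le_exp.2 (mul_le_mul_of_nonneg_right (le_max_left _ _) (hL0 ω))
end

section
/- Define u₀*(t) = 1, u₁*(t) = U(t), and u_{k+1}*(t) = ∫₀ᵗ u(t−s) u_k*(s) ds for k ≥ 1, where u : (0,∞) → ℝ is nonnegative with u(t) ≤ C₂ t^{β−1} on (0,T] and U(t) = ∫₀ᵗ u(s)ds ≤ C₁ t^β on [0,T], β ∈ (0,1). Then for every k ≥ 1 and t ∈ [0,T]: u_k*(t) ≤ C₁ C₂^{k−1} (β / Γ(kβ + 1)) (Γ(β) t^β)^k. -/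
open Set MeasureTheory

/-!
Induction on `k`. Since `u ≥ 0`, all iterates are nonnegative, so the bounds
`u r ≤ C₂ r^(β-1)` and `u_k^*(s) ≤ c_k s^(kβ)` can be multiplied under the convolution integral,
which becomes the Beta integral `∫₀ᵗ (t-s)^(β-1) s^(kβ) ds = Γ(β) Γ(kβ+1) / Γ((k+1)β+1) t^((k+1)β)`;
its factor `Γ(kβ+1)` cancels the one in `c_k`. No integrability of the iterates is needed: comparing
a nonnegative function with an integrable majorant does not require it.
-/

lemma integral_nonneg_of_forall_Ioo {f : ℝ → ℝ} {a b : ℝ} (hab : a ≤ b)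
    (hf : ∀ x ∈ Ioo a b, 0 ≤ f x) : 0 ≤ ∫ x in a..b, f x := by
  rw [intervalIntegral.integral_of_le hab, integral_Ioc_eq_integral_Ioo]
  exact setIntegral_nonneg measurableSet_Ioo hf

lemma integral_mono_of_nonneg_of_forall_Ioo {f g : ℝ → ℝ} {a b : ℝ} (hab : a ≤ b)
    (hg : IntervalIntegrable g volume a b) (hf : ∀ x ∈ Ioo a b, 0 ≤ f x)
    (hfg : ∀ x ∈ Ioo a b, f x ≤ g x) : ∫ x in a..b, f x ≤ ∫ x in a..b, g x := by
  simp only [intervalIntegral.integral_of_le hab, integral_Ioc_eq_integral_Ioo]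
  exact integral_mono_of_nonneg (ae_restrict_of_forall_mem measurableSet_Ioo hf)
    (hg.1.mono_set Ioo_subset_Ioc_self) (ae_restrict_of_forall_mem measurableSet_Ioo hfg)

lemma integral_sub_rpow_mul_rpow {a b t : ℝ} (ha : 0 < a) (hb : 0 < b) (ht : 0 < t) :
    ∫ s in (0:ℝ)..t, (t - s) ^ (a - 1) * s ^ (b - 1) =
      Real.Gamma a * Real.Gamma b / Real.Gamma (a + b) * t ^ (a + b - 1) := by
  have hscaled := Complex.betaIntegral_scaled b a ht
  rw [Complex.betaIntegral_eq_Gamma_mul_div _ _ (by simpa) (by simpa)] at hscaled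
  apply Complex.ofReal_injective
  rw [← intervalIntegral.integral_ofReal, intervalIntegral.integral_congr
    (g := fun x : ℝ => (x : ℂ) ^ ((b : ℂ) - 1) * ((t : ℂ) - x) ^ ((a : ℂ) - 1)), hscaled]
  · push_cast [Complex.ofReal_cpow ht.le, ← Complex.Gamma_ofReal]
    rw [add_comm (b : ℂ)]
    ring
  · intro x hx
    rw [uIcc_of_le ht.le] at hx
    push_cast [Complex.ofReal_cpow hx.1, Complex.ofReal_cpow (sub_nonneg.2 hx.2)]
    ring

lemma intervalIntegrable_sub_rpow_mul_rpow {a b t : ℝ} (ha : 0 < a) (hb : 0 < b) (ht : 0 < t) :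
    IntervalIntegrable (fun s => (t - s) ^ (a - 1) * s ^ (b - 1)) volume 0 t := by
  refine intervalIntegral.intervalIntegrable_of_integral_ne_zero ?_
  rw [integral_sub_rpow_mul_rpow ha hb ht]
  have := Real.Gamma_pos_of_pos ha
  have := Real.Gamma_pos_of_pos hb
  have := Real.Gamma_pos_of_pos (add_pos ha hb)
  positivity

lemma integral_comp_sub_mul_le_of_le_rpow {f g : ℝ → ℝ} {a b t A B : ℝ}
    (ha : 0 < a) (hb : 0 < b) (ht : 0 < t)
    (hf0 : ∀ s ∈ Ioo 0 t, 0 ≤ f s) (hf : ∀ s ∈ Ioo 0 t, f s ≤ A * s ^ (a - 1))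
    (hg0 : ∀ s ∈ Ioo 0 t, 0 ≤ g s) (hg : ∀ s ∈ Ioo 0 t, g s ≤ B * s ^ (b - 1)) :
    ∫ s in (0:ℝ)..t, f (t - s) * g s ≤
      A * B * (Real.Gamma a * Real.Gamma b / Real.Gamma (a + b)) * t ^ (a + b - 1) := by
  have hsub : ∀ s ∈ Ioo 0 t, t - s ∈ Ioo 0 t := fun s hs =>
    ⟨by linarith [hs.2], by linarith [hs.1]⟩
  calc ∫ s in (0:ℝ)..t, f (t - s) * g s
      ≤ ∫ s in (0:ℝ)..t, A * B * ((t - s) ^ (a - 1) * s ^ (b - 1)) := by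
        refine integral_mono_of_nonneg_of_forall_Ioo ht.le
          ((intervalIntegrable_sub_rpow_mul_rpow ha hb ht).const_mul _)
          (fun s hs => mul_nonneg (hf0 _ (hsub s hs)) (hg0 s hs)) (fun s hs => ?_)
        calc f (t - s) * g s ≤ (A * (t - s) ^ (a - 1)) * (B * s ^ (b - 1)) :=
              mul_le_mul (hf _ (hsub s hs)) (hg s hs) (hg0 s hs)
                ((hf0 _ (hsub s hs)).trans (hf _ (hsub s hs)))
          _ = A * B * ((t - s) ^ (a - 1) * s ^ (b - 1)) := by ring
    _ = A * B * (Real.Gamma a * Real.Gamma b / Real.Gamma (a + b)) * t ^ (a + b - 1) := by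
        rw [intervalIntegral.integral_const_mul, integral_sub_rpow_mul_rpow ha hb ht]
        ring

lemma convPower_nonneg {u : ℝ → ℝ} {v : ℕ → ℝ → ℝ} {T : ℝ}
    (hu0 : ∀ t ∈ Ioc 0 T, 0 ≤ u t) (hv0 : ∀ t, v 0 t = 1)
    (hvs : ∀ k t, v (k + 1) t = ∫ s in (0:ℝ)..t, u (t - s) * v k s) :
    ∀ k, ∀ t ∈ Icc 0 T, 0 ≤ v k t
  | 0, t, _ => by rw [hv0]; exact zero_le_one
  | k + 1, t, ht => by
    rw [hvs]
    refine integral_nonneg_of_forall_Ioo ht.1 fun s hs => mul_nonneg ?_ ?_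
    · exact hu0 _ ⟨by linarith [hs.2], by linarith [hs.1, ht.2]⟩
    · exact convPower_nonneg hu0 hv0 hvs k s ⟨hs.1.le, hs.2.le.trans ht.2⟩

lemma convPower_succ_le {u : ℝ → ℝ} {v : ℕ → ℝ → ℝ} {C₁ C₂ β T : ℝ} (hβ : 0 < β)
    (hu0 : ∀ t ∈ Ioc 0 T, 0 ≤ u t) (hub : ∀ t ∈ Ioc 0 T, u t ≤ C₂ * t ^ (β - 1))
    (hU : ∀ t ∈ Icc 0 T, (∫ s in (0:ℝ)..t, u s) ≤ C₁ * t ^ β) (hv0 : ∀ t, v 0 t = 1)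
    (hvs : ∀ k t, v (k + 1) t = ∫ s in (0:ℝ)..t, u (t - s) * v k s) :
    ∀ k : ℕ, ∀ t ∈ Icc 0 T, v (k + 1) t ≤
      C₁ * C₂ ^ k * (β / Real.Gamma ((k + 1 : ℕ) * β + 1)) * (Real.Gamma β * t ^ β) ^ (k + 1)
  | 0, t, ht => by
    have hv1 : v 1 t = ∫ s in (0:ℝ)..t, u s := by simp [hvs, hv0]
    have hΓ : Real.Gamma β ≠ 0 := (Real.Gamma_pos_of_pos hβ).ne'
    rw [hv1, zero_add, Nat.cast_one, one_mul, pow_zero, pow_one, Real.Gamma_add_one hβ.ne']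
    convert hU t ht using 1
    field_simp
  | k + 1, t, ht => by
    rcases ht.1.eq_or_lt with rfl | htpos
    · simp [hvs, Real.zero_rpow hβ.ne']
    have hΓβ := Real.Gamma_pos_of_pos hβ
    set b : ℝ := ((k + 1 : ℕ) : ℝ) * β + 1 with hb
    have hΓb := Real.Gamma_pos_of_pos (show 0 < b by positivity)
    have hg : ∀ s ∈ Ioo 0 t, v (k + 1) s ≤
        C₁ * C₂ ^ k * (β / Real.Gamma b) * Real.Gamma β ^ (k + 1) * s ^ (b - 1) := by
      intro s hs
      refine (convPower_succ_le hβ hu0 hub hU hv0 hvs k s ⟨hs.1.le, hs.2.le.trans ht.2⟩).trans_eq ?_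
      rw [mul_pow, ← Real.rpow_mul_natCast hs.1.le, hb, add_sub_cancel_right, mul_comm β]
      ring
    rw [hvs]
    refine (integral_comp_sub_mul_le_of_le_rpow hβ (by positivity) htpos
      (fun s hs => hu0 s ⟨hs.1, hs.2.le.trans ht.2⟩) (fun s hs => hub s ⟨hs.1, hs.2.le.trans ht.2⟩)
      (fun s hs => convPower_nonneg hu0 hv0 hvs _ s ⟨hs.1.le, hs.2.le.trans ht.2⟩) hg).trans_eq ?_
    have hβb : β + b = ((k + 1 + 1 : ℕ) : ℝ) * β + 1 := by rw [hb]; push_cast; ring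
    rw [hβb, mul_pow, ← Real.rpow_mul_natCast ht.1, add_sub_cancel_right, mul_comm β]
    field_simp
    ring

theorem stmt9_general (u : ℝ → ℝ) (v : ℕ → ℝ → ℝ) (C₁ C₂ β T : ℝ)
    (hβ : β ∈ Set.Ioo (0:ℝ) 1)
    (hu0 : ∀ t ∈ Set.Ioc (0:ℝ) T, 0 ≤ u t)
    (hub : ∀ t ∈ Set.Ioc (0:ℝ) T, u t ≤ C₂ * t ^ (β - 1))
    (hU : ∀ t ∈ Set.Icc (0:ℝ) T, (∫ s in (0:ℝ)..t, u s) ≤ C₁ * t ^ β)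
    (hv0 : ∀ t : ℝ, v 0 t = 1)
    (hvs : ∀ (k : ℕ) (t : ℝ), v (k + 1) t = ∫ s in (0:ℝ)..t, u (t - s) * v k s) :
    ∀ k ≥ 1, ∀ t ∈ Set.Icc (0:ℝ) T,
      v k t ≤ C₁ * C₂ ^ (k - 1) * (β / Real.Gamma ((k : ℝ) * β + 1)) *
        (Real.Gamma β * t ^ β) ^ k := by
  intro k hk t ht
  obtain ⟨m, rfl⟩ := Nat.exists_eq_add_of_le' hk
  simpa using convPower_succ_le hβ.1 hu0 hub hU hv0 hvs m t ht

/-- The inductive estimate on the iterated convolution powers `u_k^*` of the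
potential density. -/
theorem stmt9 (u : ℝ → ℝ) (v : ℕ → ℝ → ℝ) (C₁ C₂ β T : ℝ)
    (hβ : β ∈ Set.Ioo (0:ℝ) 1) (hC₁ : 0 < C₁) (hC₂ : 0 < C₂) (hT : 0 < T)
    (humeas : Measurable u)
    (hu0 : ∀ t ∈ Set.Ioc (0:ℝ) T, 0 ≤ u t)
    (hub : ∀ t ∈ Set.Ioc (0:ℝ) T, u t ≤ C₂ * t ^ (β - 1))
    (hU : ∀ t ∈ Set.Icc (0:ℝ) T, (∫ s in (0:ℝ)..t, u s) ≤ C₁ * t ^ β)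
    (hv0 : ∀ t : ℝ, v 0 t = 1)
    (hvs : ∀ (k : ℕ) (t : ℝ), v (k + 1) t = ∫ s in (0:ℝ)..t, u (t - s) * v k s) :
    ∀ k ≥ 1, ∀ t ∈ Set.Icc (0:ℝ) T,
      v k t ≤ C₁ * C₂ ^ (k - 1) * (β / Real.Gamma ((k : ℝ) * β + 1)) *
        (Real.Gamma β * t ^ β) ^ k :=
  stmt9_general u v C₁ C₂ β T hβ hu0 hub hU hv0 hvs
end
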